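/- arXiv:1912.08536 — 5 statements merged into one kernel-verified Lean document; each statement's English description precedes it below -/
import Mathlib

section
/- Let k, m, s be positive odd integers with 3 ≤ s ≤ m. Then there exists a signed magic rectangle SMR(m, km; ks, s). In particular, for every odd k ≥ 1 and odd m ≥ 3 there exists a signed magic rectangle SMR(m, km; 3k, 3). -/
/-!
Take `m, k, s` odd and index the `k m` columns by pairs `(t, v) ∈ ℤ/k × ℤ/m`. Fill the cell
`(i, (t, v))` iff it lies on one of the first `s` cyclic diagonals `d = v - i`, with the number
whose balanced mixed-radix digits in base `(k m, k, 1)` are `d - ⌊s/2⌋`, `σ_d i` and `τ_d t`;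
here `σ_d`, `τ_d` permute `ℤ/m`, `ℤ/k` and are read through centered representatives
(`ZMod.valMinAbs`). Distinct cells get distinct digits, so the `m k s` entries are exactly the
`m k s` elements of `X`. Row and column sums vanish digit by digit as soon as the `σ_d` cancel
both pointwise and along the shifted points `x - d`, and the `τ_d` cancel pointwise. Such
families exist for every odd `s ≥ 3`: a block of length 3 or 5 built from `x ↦ x/2` and
`x ↦ (x - 1)/2`, whose centered representatives add up to the one of `x - 1/2`, followed by
copies of the block `x, -x - 1, -x, x + 1`.
-/

/-- The set `X` of allowed entries of a signed magic rectangle with `m` rows and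
`r` filled cells per row: `{0, ±1, …, ±(mr-1)/2}` if `mr` is odd, and
`{±1, …, ±(mr/2)}` if `mr` is even. -/
noncomputable def smrEntrySet (m r : ℕ) : Finset ℤ :=
  if (m * r) % 2 = 1 then
    Finset.Icc (-(((m : ℤ) * r - 1) / 2)) (((m : ℤ) * r - 1) / 2)
  else
    (Finset.Icc (-((m : ℤ) * r / 2)) ((m : ℤ) * r / 2)).erase 0

/-- `A` is a signed magic rectangle `SMR(m, n; r, s)`: an `m × n` array with cells
either empty (`none`) or filled with an integer, having exactly `r` filled cells in
each row and `s` in each column, whose entries are exactly the elements of the set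
`smrEntrySet m r`, each appearing exactly once, and all of whose row sums and column
sums are zero. -/
def IsSMR (m n r s : ℕ) (A : Fin m → Fin n → Option ℤ) : Prop :=
  (∀ i : Fin m, (Finset.univ.filter fun j : Fin n => A i j ≠ none).card = r) ∧
  (∀ j : Fin n, (Finset.univ.filter fun i : Fin m => A i j ≠ none).card = s) ∧
  (∀ (i : Fin m) (j : Fin n) (x : ℤ), A i j = some x → x ∈ smrEntrySet m r) ∧
  (∀ x ∈ smrEntrySet m r, ∃! p : Fin m × Fin n, A p.1 p.2 = some x) ∧
  (∀ i : Fin m, ∑ j : Fin n, (A i j).getD 0 = 0) ∧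
  (∀ j : Fin n, ∑ i : Fin m, (A i j).getD 0 = 0)

open Finset

namespace ZMod

variable {n : ℕ}

theorem valMinAbs_neg_of_odd (hn : Odd n) (x : ZMod n) : (-x).valMinAbs = -x.valMinAbs :=
  valMinAbs_neg_of_ne_half fun h => Nat.not_even_iff_odd.2 hn ⟨x.val, by omega⟩

theorem two_mul_abs_valMinAbs_lt (hn : Odd n) (x : ZMod n) : 2 * |x.valMinAbs| < n := by
  have : NeZero n := ⟨hn.pos.ne'⟩
  have := natAbs_valMinAbs_le x
  obtain ⟨h, rfl⟩ := hn
  rw [Int.abs_eq_natAbs]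
  omega

theorem valMinAbs_add_of_two_mul_sub_eq_one (hn : Odd n) {u w : ZMod n} (huw : 2 * (u - w) = 1) :
    (u + w).valMinAbs = u.valMinAbs + w.valMinAbs := by
  have : NeZero n := ⟨hn.pos.ne'⟩
  have hu := two_mul_abs_valMinAbs_lt hn u
  have hw := two_mul_abs_valMinAbs_lt hn w
  obtain ⟨q, hq⟩ : (n : ℤ) ∣ 2 * (u.valMinAbs - w.valMinAbs) - 1 := by
    rw [← intCast_zmod_eq_zero_iff_dvd]
    push_cast [coe_valMinAbs]
    rw [huw, sub_self]
  rw [valMinAbs_spec]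
  refine ⟨by push_cast [coe_valMinAbs]; rfl, ?_⟩
  obtain ⟨h, rfl⟩ := hn
  have := le_abs_self u.valMinAbs
  have := neg_abs_le u.valMinAbs
  have := le_abs_self w.valMinAbs
  have := neg_abs_le w.valMinAbs
  push_cast at hu hw hq ⊢
  -- `q = ±1` (`q = 0` fails by parity), so the representatives differ by `h + 1` or `-h`
  have hq1 : -1 ≤ q := by nlinarith
  have hq2 : q ≤ 1 := by nlinarith
  rw [Set.mem_Ioc]
  interval_cases q <;> omega

theorem valMinAbs_add_eq_zero (hn : Odd n) {x y : ZMod n} (h : x + y = 0) :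
    x.valMinAbs + y.valMinAbs = 0 := by
  rw [eq_neg_of_add_eq_zero_right h, valMinAbs_neg_of_odd hn, add_neg_cancel]

theorem valMinAbs_add_add_eq_zero (hn : Odd n) {u w z : ZMod n} (huw : 2 * (u - w) = 1)
    (h : u + w + z = 0) : u.valMinAbs + w.valMinAbs + z.valMinAbs = 0 := by
  rw [← valMinAbs_add_of_two_mul_sub_eq_one hn huw, valMinAbs_add_eq_zero hn h]

theorem sum_ite_val_lt {M : Type*} [AddCommMonoid M] [NeZero n] {s : ℕ} (hsn : s ≤ n)
    (F : ℕ → M) : ∑ x : ZMod n, (if x.val < s then F x.val else 0) = ∑ d ∈ range s, F d := by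
  rw [← sum_filter]
  refine sum_nbij' (fun x => x.val) (fun d => (d : ZMod n)) ?_ ?_ ?_ ?_ fun _ _ => rfl
  · simp
  · intro d hd
    simp_all [val_cast_of_lt (lt_of_lt_of_le (mem_range.1 hd) hsn)]
  · simp
  · intro d hd
    exact val_cast_of_lt (lt_of_lt_of_le (mem_range.1 hd) hsn)

theorem sum_prod_ite_val_sub_lt {T M : Type*} [Fintype T] [AddCommMonoid M] [NeZero n] {s : ℕ}
    (hsn : s ≤ n) (i : ZMod n) (G : ℕ → T → M) :
    ∑ c : T × ZMod n, (if (c.2 - i).val < s then G (c.2 - i).val c.1 else 0) =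
      ∑ t, ∑ d ∈ range s, G d t := by
  rw [Fintype.sum_prod_type]
  refine sum_congr rfl fun t _ => ?_
  exact ((Equiv.subRight i).sum_comp fun w => if w.val < s then G w.val t else 0).trans
    (sum_ite_val_lt hsn fun d => G d t)

theorem sum_ite_val_sub_lt {M : Type*} [AddCommMonoid M] [NeZero n] {s : ℕ} (hsn : s ≤ n)
    (v : ZMod n) (G : ℕ → ZMod n → M) :
    ∑ i : ZMod n, (if (v - i).val < s then G (v - i).val i else 0) =
      ∑ d ∈ range s, G d (v - d) := by
  rw [← (Equiv.subLeft v).sum_comp, ← sum_ite_val_lt hsn]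
  simp only [Equiv.subLeft_apply, sub_sub_cancel, natCast_zmod_val]

end ZMod

structure IsMagicStrip {n : ℕ} (ℓ : ℕ) (σ : ℕ → Equiv.Perm (ZMod n)) : Prop where
  sum_valMinAbs : ∀ x, ∑ d ∈ range ℓ, (σ d x).valMinAbs = 0
  sum_valMinAbs_sub : ∀ x, ∑ d ∈ range ℓ, (σ d (x - d)).valMinAbs = 0

theorem IsMagicStrip.append {n ℓ ℓ' : ℕ} {σ τ : ℕ → Equiv.Perm (ZMod n)}
    (hσ : IsMagicStrip ℓ σ) (hτ : IsMagicStrip ℓ' τ) :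
    IsMagicStrip (ℓ + ℓ') fun d => if d < ℓ then σ d else τ (d - ℓ) := by
  constructor <;> intro x <;> rw [sum_range_add] <;>
    simp only [add_tsub_cancel_left, add_lt_iff_neg_left, not_lt_zero, if_false]
  · rw [sum_congr rfl fun d hd => by rw [if_pos (mem_range.1 hd)], hσ.sum_valMinAbs,
      hτ.sum_valMinAbs, add_zero]
  · rw [sum_congr rfl fun d hd => by rw [if_pos (mem_range.1 hd)], hσ.sum_valMinAbs_sub,
      zero_add]
    simpa [sub_sub] using hτ.sum_valMinAbs_sub (x - ℓ)

namespace MagicStrip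

open Equiv ZMod

variable {n : ℕ}

def three (u : (ZMod n)ˣ) : ℕ → Perm (ZMod n)
  | 0 => u.mulLeft.trans (Equiv.addRight (-u))
  | 1 => (Equiv.neg _).trans (Equiv.addRight u)
  | _ => u.mulLeft

def four : ℕ → Perm (ZMod n)
  | 0 => Equiv.refl _
  | 1 => (Equiv.neg _).trans (Equiv.addRight (-1))
  | 2 => Equiv.neg _
  | _ => Equiv.addRight 1

def five (u : (ZMod n)ˣ) : ℕ → Perm (ZMod n)
  | 0 => (Equiv.neg _).trans (Equiv.addRight u)
  | 1 => u.mulLeft.trans (Equiv.addRight (-u))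
  | 2 => Equiv.addRight (2 - u)
  | 3 => u.mulLeft
  | _ => (Equiv.neg _).trans (Equiv.addRight (u - 2))

theorem isMagicStrip_three (hn : Odd n) {u : (ZMod n)ˣ} (hu : 2 * (u : ZMod n) = 1) :
    IsMagicStrip 3 (three u) := by
  constructor <;> intro x <;>
    simp only [sum_range_succ, sum_range_zero, zero_add, Nat.cast_zero, Nat.cast_one,
      Nat.cast_ofNat, sub_zero, three, trans_apply, neg_apply, coe_addRight, Units.mulLeft_apply]
  · linarith [valMinAbs_add_add_eq_zero hn (u := u * x) (w := u * x + -u) (z := -x + u)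
      (by linear_combination hu) (by linear_combination x * hu)]
  · linarith [valMinAbs_add_add_eq_zero hn (u := u * x + -u) (w := u * (x - 2))
      (z := -(x - 1) + u) (by linear_combination hu) (by linear_combination (x - 1) * hu)]

theorem isMagicStrip_four (hn : Odd n) : IsMagicStrip 4 (four (n := n)) := by
  constructor <;> intro x <;>
    simp only [sum_range_succ, sum_range_zero, zero_add, Nat.cast_zero, Nat.cast_one,
      Nat.cast_ofNat, sub_zero, four, trans_apply, neg_apply, coe_addRight, refl_apply]
  · linarith [valMinAbs_add_eq_zero hn (x := x) (y := -x) (by ring),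
      valMinAbs_add_eq_zero hn (x := -x + -1) (y := x + 1) (by ring)]
  · linarith [valMinAbs_add_eq_zero hn (x := x) (y := -(x - 1) + -1) (by ring),
      valMinAbs_add_eq_zero hn (x := -(x - 2)) (y := x - 3 + 1) (by ring)]

theorem isMagicStrip_five (hn : Odd n) {u : (ZMod n)ˣ} (hu : 2 * (u : ZMod n) = 1) :
    IsMagicStrip 5 (five u) := by
  constructor <;> intro x <;>
    simp only [sum_range_succ, sum_range_zero, zero_add, Nat.cast_zero, Nat.cast_one,
      Nat.cast_ofNat, sub_zero, five, trans_apply, neg_apply, coe_addRight, Units.mulLeft_apply]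
  · linarith [valMinAbs_add_add_eq_zero hn (u := u * x) (w := u * x + -u) (z := -x + u)
      (by linear_combination hu) (by linear_combination x * hu),
      valMinAbs_add_eq_zero hn (x := x + (2 - u)) (y := -x + (u - 2)) (by ring)]
  · linarith [valMinAbs_add_add_eq_zero hn (u := u * (x - 1) + -u) (w := u * (x - 3))
      (z := -(x - 4) + (u - 2)) (by linear_combination hu) (by linear_combination (x - 2) * hu),
      valMinAbs_add_eq_zero hn (x := -x + u) (y := x - 2 + (2 - u)) (by ring)]

end MagicStrip

theorem exists_isMagicStrip {n ℓ : ℕ} (hn : Odd n) (hℓ : Odd ℓ) (h3 : 3 ≤ ℓ) :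
    ∃ σ : ℕ → Equiv.Perm (ZMod n), IsMagicStrip ℓ σ := by
  obtain ⟨u, hu⟩ : ∃ u : (ZMod n)ˣ, 2 * (u : ZMod n) = 1 :=
    ⟨(ZMod.unitOfCoprime 2 (Nat.coprime_two_left.2 hn))⁻¹, by simp⟩
  induction ℓ using Nat.strong_induction_on with
  | _ ℓ ih =>
    obtain rfl | rfl | h7 : ℓ = 3 ∨ ℓ = 5 ∨ 7 ≤ ℓ := by
      obtain ⟨j, rfl⟩ := hℓ
      omega
    · exact ⟨_, MagicStrip.isMagicStrip_three hn hu⟩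
    · exact ⟨_, MagicStrip.isMagicStrip_five hn hu⟩
    · obtain ⟨σ, hσ⟩ := ih (ℓ - 4) (by omega)
        (by obtain ⟨j, rfl⟩ := hℓ; exact ⟨j - 2, by omega⟩) (by omega)
      have := hσ.append (MagicStrip.isMagicStrip_four hn)
      rw [Nat.sub_add_cancel (by omega)] at this
      exact ⟨_, this⟩

theorem existsUnique_eq_some_of_card_le {α β : Type*} [Fintype α] [DecidableEq β]
    {f : α → Option β} {X : Finset β} (hmem : ∀ a b, f a = some b → b ∈ X)
    (hinj : ∀ a a' b, f a = some b → f a' = some b → a = a') (hcard : #X ≤ #{a | f a ≠ none}) :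
    ∀ b ∈ X, ∃! a, f a = some b := by
  have hsome {a} (ha : a ∈ ({a | f a ≠ none} : Finset α)) : (f a).isSome :=
    Option.isSome_iff_ne_none.2 (mem_filter.1 ha).2
  intro b hb
  obtain ⟨a, ha, hab⟩ := surj_on_of_inj_on_of_card_le (fun a ha => (f a).get (hsome ha))
    (fun a ha => hmem _ _ (Option.some_get _).symm)
    (fun a a' ha ha' h => hinj a a' _ (Option.some_get _).symm (by rw [h, Option.some_get]))
    hcard b hb
  have hfa : f a = some b := by rw [hab, Option.some_get]
  exact ⟨a, hfa, fun a' ha' => hinj _ _ _ ha' hfa⟩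

structure IsSignedMagicArray {R C : Type*} [Fintype R] [Fintype C] (X : Finset ℤ) (r s : ℕ)
    (A : R → C → Option ℤ) : Prop where
  card_row : ∀ i, #{j | A i j ≠ none} = r
  card_col : ∀ j, #{i | A i j ≠ none} = s
  mem : ∀ i j x, A i j = some x → x ∈ X
  existsUnique : ∀ x ∈ X, ∃! p : R × C, A p.1 p.2 = some x
  sum_row : ∀ i, ∑ j, (A i j).getD 0 = 0
  sum_col : ∀ j, ∑ i, (A i j).getD 0 = 0

theorem IsSignedMagicArray.isSMR_comp {m n r s : ℕ} {R C : Type*} [Fintype R] [Fintype C]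
    {A : R → C → Option ℤ} (hA : IsSignedMagicArray (smrEntrySet m r) r s A) (eR : Fin m ≃ R)
    (eC : Fin n ≃ C) : IsSMR m n r s fun i j => A (eR i) (eC j) := by
  refine ⟨fun i => ?_, fun j => ?_, fun i j => hA.mem _ _, fun x hx => ?_, fun i => ?_, fun j => ?_⟩
  · rw [← hA.card_row (eR i)]
    exact card_equiv eC (by simp)
  · rw [← hA.card_col (eC j)]
    exact card_equiv eR (by simp)
  · exact ((eR.prodCongr eC).existsUnique_congr (by simp)).2 (hA.existsUnique x hx)
  · exact (eC.sum_comp fun c => (A (eR i) c).getD 0).trans (hA.sum_row _)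
  · exact (eR.sum_comp fun r => (A r (eC j)).getD 0).trans (hA.sum_col _)

theorem mem_smrEntrySet_of_odd {m r : ℕ} (h : Odd (m * r)) {x : ℤ} :
    x ∈ smrEntrySet m r ↔ 2 * |x| < m * r := by
  rw [smrEntrySet, if_pos (Nat.odd_iff.1 h), mem_Icc]
  obtain ⟨j, hj⟩ := h
  have hj : (m : ℤ) * r = 2 * j + 1 := by exact_mod_cast hj
  rw [hj]
  rcases abs_cases x with ⟨hx, hx'⟩ | ⟨hx, hx'⟩ <;> omega

theorem card_smrEntrySet_of_odd {m r : ℕ} (h : Odd (m * r)) : #(smrEntrySet m r) = m * r := by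
  rw [smrEntrySet, if_pos (Nat.odd_iff.1 h), Int.card_Icc]
  obtain ⟨j, hj⟩ := h
  have hj' : (m : ℤ) * r = 2 * j + 1 := by exact_mod_cast hj
  rw [hj', hj]
  omega

theorem eq_and_eq_of_mul_add_eq_mul_add {b q q' r r' : ℤ} (hr : 2 * |r| < b)
    (hr' : 2 * |r'| < b) (h : b * q + r = b * q' + r') : q = q' ∧ r = r' := by
  have hrr : r = r' := by
    have hdvd : b ∣ r - r' := ⟨q' - q, by linear_combination h⟩
    have := Int.eq_zero_of_abs_lt_dvd hdvd (by linarith [abs_sub r r'])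
    linarith
  subst hrr
  exact ⟨mul_left_cancel₀ (by linarith [abs_nonneg r] : b ≠ 0) (by linarith), rfl⟩

theorem two_mul_abs_mul_add_lt {b q r c : ℤ} (hq : 2 * |q| < c) (hr : 2 * |r| < b) :
    2 * |b * q + r| < b * c := by
  have hb : 0 ≤ b := by linarith [abs_nonneg r]
  have : |b * q + r| ≤ b * |q| + |r| := by
    simpa [abs_mul, abs_of_nonneg hb] using abs_add_le (b * q) r
  nlinarith

theorem sum_range_sub_half {s : ℕ} (hs : Odd s) : ∑ d ∈ range s, ((d : ℤ) - (s / 2 : ℕ)) = 0 := by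
  obtain ⟨h, rfl⟩ := hs
  have hsum := sum_range_id_mul_two (2 * h + 1)
  rw [sum_sub_distrib, sum_const, card_range, ← Nat.cast_sum, nsmul_eq_mul, sub_eq_zero]
  norm_cast
  rw [Nat.add_sub_cancel] at hsum
  rw [show (2 * h + 1) / 2 = h by omega]
  linarith

section ProductArray

variable {k m s : ℕ} {σ : ℕ → Equiv.Perm (ZMod m)} {τ : ℕ → Equiv.Perm (ZMod k)}

def cellValue (s : ℕ) (σ : ℕ → Equiv.Perm (ZMod m)) (τ : ℕ → Equiv.Perm (ZMod k)) (d : ℕ)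
    (i : ZMod m) (t : ZMod k) : ℤ :=
  k * m * ((d : ℤ) - (s / 2 : ℕ)) + k * (σ d i).valMinAbs + (τ d t).valMinAbs

def productArray (s : ℕ) (σ : ℕ → Equiv.Perm (ZMod m)) (τ : ℕ → Equiv.Perm (ZMod k))
    (i : ZMod m) (c : ZMod k × ZMod m) : Option ℤ :=
  if (c.2 - i).val < s then some (cellValue s σ τ (c.2 - i).val i c.1) else none

theorem productArray_ne_none_iff {i : ZMod m} {c : ZMod k × ZMod m} :
    productArray s σ τ i c ≠ none ↔ (c.2 - i).val < s := by
  unfold productArray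
  split_ifs with h <;> simp [h]

theorem getD_productArray (i : ZMod m) (c : ZMod k × ZMod m) :
    (productArray s σ τ i c).getD 0 =
      if (c.2 - i).val < s then cellValue s σ τ (c.2 - i).val i c.1 else 0 := by
  unfold productArray
  split_ifs <;> rfl

theorem sum_cellValue (hs : Odd s) (f : ℕ → ZMod m) (t : ZMod k)
    (hσ : ∑ d ∈ range s, (σ d (f d)).valMinAbs = 0) (hτ : ∑ d ∈ range s, (τ d t).valMinAbs = 0) :
    ∑ d ∈ range s, cellValue s σ τ d (f d) t = 0 := by
  simp only [cellValue, sum_add_distrib, ← mul_sum, hσ, hτ, sum_range_sub_half hs]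
  ring

theorem two_mul_abs_cellValue_lt (hk : Odd k) (hm : Odd m) (hs : Odd s) {d : ℕ} (hd : d < s)
    (i : ZMod m) (t : ZMod k) : 2 * |cellValue s σ τ d i t| < m * (k * s) := by
  have hδ : 2 * |(d : ℤ) - (s / 2 : ℕ)| < s := by
    obtain ⟨h, rfl⟩ := hs
    rcases abs_cases ((d : ℤ) - ((2 * h + 1) / 2 : ℕ)) with ⟨h1, h2⟩ | ⟨h1, h2⟩ <;> omega
  have := two_mul_abs_mul_add_lt
    (two_mul_abs_mul_add_lt hδ (ZMod.two_mul_abs_valMinAbs_lt hm (σ d i)))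
    (ZMod.two_mul_abs_valMinAbs_lt hk (τ d t))
  have hval : cellValue s σ τ d i t =
      k * (m * ((d : ℤ) - (s / 2 : ℕ)) + (σ d i).valMinAbs) + (τ d t).valMinAbs := by
    rw [cellValue]
    ring
  rw [hval]
  linarith

theorem eq_of_productArray_eq_some (hk : Odd k) (hm : Odd m) {i i' : ZMod m}
    {c c' : ZMod k × ZMod m} {x : ℤ} (h : productArray s σ τ i c = some x)
    (h' : productArray s σ τ i' c' = some x) : i = i' ∧ c = c' := by
  unfold productArray at h h'
  split_ifs at h h'
  have hval := (Option.some.inj h).trans (Option.some.inj h').symm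
  simp only [cellValue, show ∀ δ β γ : ℤ, (k : ℤ) * m * δ + k * β + γ = k * (m * δ + β) + γ
    from fun _ _ _ => by ring] at hval
  obtain ⟨hδβ, hγ⟩ := eq_and_eq_of_mul_add_eq_mul_add (ZMod.two_mul_abs_valMinAbs_lt hk _)
    (ZMod.two_mul_abs_valMinAbs_lt hk _) hval
  obtain ⟨hδ, hβ⟩ := eq_and_eq_of_mul_add_eq_mul_add (ZMod.two_mul_abs_valMinAbs_lt hm _)
    (ZMod.two_mul_abs_valMinAbs_lt hm _) hδβ
  have hd : (c.2 - i).val = (c'.2 - i').val := by omega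
  rw [hd, ZMod.valMinAbs_inj, Equiv.apply_eq_iff_eq] at hβ hγ
  subst hβ
  refine ⟨rfl, Prod.ext hγ ?_⟩
  have : NeZero m := ⟨hm.pos.ne'⟩
  simpa using ZMod.val_injective _ hd

theorem isSignedMagicArray_productArray [NeZero k] [NeZero m] (hk : Odd k) (hm : Odd m)
    (hs : Odd s) (hsm : s ≤ m) (hσ : IsMagicStrip s σ) (hτ : IsMagicStrip s τ) :
    IsSignedMagicArray (smrEntrySet m (k * s)) (k * s) s (productArray s σ τ) := by
  have hodd : Odd (m * (k * s)) := hm.mul (hk.mul hs)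
  have card_row (i : ZMod m) : #{c | productArray s σ τ i c ≠ none} = k * s := by
    simp_rw [card_filter, productArray_ne_none_iff]
    exact (ZMod.sum_prod_ite_val_sub_lt hsm i fun _ (_ : ZMod k) => 1).trans (by simp)
  have mem (i : ZMod m) (c : ZMod k × ZMod m) (x : ℤ) (h : productArray s σ τ i c = some x) :
      x ∈ smrEntrySet m (k * s) := by
    unfold productArray at h
    split_ifs at h with hd
    rw [← Option.some.inj h, mem_smrEntrySet_of_odd hodd]
    exact_mod_cast two_mul_abs_cellValue_lt hk hm hs hd i c.1
  refine ⟨card_row, fun c => ?_, mem, ?_, fun i => ?_, fun c => ?_⟩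
  · simp_rw [card_filter, productArray_ne_none_iff]
    exact (ZMod.sum_ite_val_sub_lt hsm c.2 fun _ _ => 1).trans (by simp)
  · refine existsUnique_eq_some_of_card_le (fun p => mem p.1 p.2)
      (fun p p' x h h' => Prod.ext_iff.2 (eq_of_productArray_eq_some hk hm h h')) ?_
    rw [card_smrEntrySet_of_odd hodd, card_filter, Fintype.sum_prod_type]
    simp_rw [← card_filter, card_row]
    simp
  · simp_rw [getD_productArray]
    rw [ZMod.sum_prod_ite_val_sub_lt hsm i fun d t => cellValue s σ τ d i t]
    exact sum_eq_zero fun t _ => sum_cellValue hs _ t (hσ.sum_valMinAbs i) (hτ.sum_valMinAbs t)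
  · simp_rw [getD_productArray]
    exact (ZMod.sum_ite_val_sub_lt hsm c.2 fun d i => cellValue s σ τ d i c.1).trans
      (sum_cellValue hs _ c.1 (hσ.sum_valMinAbs_sub c.2) (hτ.sum_valMinAbs c.1))

end ProductArray

theorem exists_isSMR {k m s : ℕ} (hk : Odd k) (hm : Odd m) (hs : Odd s) (h3 : 3 ≤ s)
    (hsm : s ≤ m) : ∃ A : Fin m → Fin (k * m) → Option ℤ, IsSMR m (k * m) (k * s) s A := by
  have : NeZero k := ⟨hk.pos.ne'⟩
  have : NeZero m := ⟨hm.pos.ne'⟩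
  obtain ⟨σ, hσ⟩ := exists_isMagicStrip hm hs h3
  obtain ⟨τ, hτ⟩ := exists_isMagicStrip hk hs h3
  exact ⟨_, (isSignedMagicArray_productArray hk hm hs hsm hσ hτ).isSMR_comp
    (ZMod.finEquiv m).toEquiv
    (finProdFinEquiv.symm.trans ((ZMod.finEquiv k).toEquiv.prodCongr (ZMod.finEquiv m).toEquiv))⟩

/-- For positive odd integers `k, m, s` with `3 ≤ s ≤ m` there exists a signed magic
rectangle `SMR(m, km; ks, s)`; in particular, for every odd `k ≥ 1` and odd `m ≥ 3`
there exists an `SMR(m, km; 3k, 3)`. -/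
theorem smr_m_km_ks_s :
    (∀ k m s : ℕ, 0 < k → Odd k → Odd m → Odd s → 3 ≤ s → s ≤ m →
      ∃ A : Fin m → Fin (k * m) → Option ℤ, IsSMR m (k * m) (k * s) s A) ∧
    (∀ k m : ℕ, 0 < k → Odd k → Odd m → 3 ≤ m →
      ∃ A : Fin m → Fin (k * m) → Option ℤ, IsSMR m (k * m) (3 * k) 3 A) :=
  ⟨fun _ _ _ _ hk hm hs h3 hsm => exists_isSMR hk hm hs h3 hsm, fun k _ _ hk hm h3 => by
    simpa only [mul_comm k 3] using exists_isSMR hk hm (by decide) le_rfl h3⟩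
end

section
/- For every even positive integer n there exists a signed magic rectangle SMR(3,n) with the additional property that each row is closed under negation: whenever an integer x appears in a row, −x also appears in that same row. -/
open Finset

theorem card_smrEntrySet (m r : ℕ) : #(smrEntrySet m r) = m * r := by
  unfold smrEntrySet
  simp only [← Nat.cast_mul]
  generalize m * r = N
  split_ifs
  · rw [Int.card_Icc]; omega
  · rw [card_erase_of_mem (by simp only [mem_Icc]; omega), Int.card_Icc]; omega

theorem smrEntrySet_of_even {m r : ℕ} (h : Even (m * r)) :
    smrEntrySet m r = (Icc (-((m : ℤ) * r / 2)) (m * r / 2)).erase 0 :=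
  if_neg (Nat.not_odd_iff_even.mpr h ∘ Nat.odd_iff.mpr)

theorem sum_eq_zero_of_injective_of_neg_mem_range {ι G : Type*} [Fintype ι] [AddCommGroup G]
    [IsAddTorsionFree G] {f : ι → G} (hf : Function.Injective f)
    (hneg : ∀ x ∈ Set.range f, -x ∈ Set.range f) : ∑ i, f i = 0 := by
  classical
  rw [← sum_image (f := fun x => x) hf.injOn]
  refine sum_involution (fun x _ => -x) (fun x _ => add_neg_cancel x)
    (fun x _ hx hx' => hx (neg_eq_self.mp hx')) (fun x hx => ?_) (fun x _ => neg_neg x)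
  simp only [mem_image, mem_univ, true_and] at hx ⊢
  exact hneg x hx

section FullArray

variable {m n : ℕ} (F : Fin m → Fin n → ℤ)

theorem injective_uncurry_of_surjOn_smrEntrySet (hmem : ∀ i j, F i j ∈ smrEntrySet m n)
    (hsurj : ∀ x ∈ smrEntrySet m n, ∃ i j, F i j = x) :
    Function.Injective (Function.uncurry F) := by
  rw [← Set.injOn_univ, ← coe_univ]
  refine injOn_of_surjOn_of_card_le _ (fun p _ => hmem p.1 p.2) (fun x hx => ?_) ?_
  · obtain ⟨i, j, rfl⟩ := hsurj x hx
    exact ⟨(i, j), mem_coe.mpr (mem_univ _), rfl⟩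
  · simp [card_smrEntrySet]

theorem isSMR_of_surjOn_smrEntrySet (hmem : ∀ i j, F i j ∈ smrEntrySet m n)
    (hsurj : ∀ x ∈ smrEntrySet m n, ∃ i j, F i j = x)
    (hrow : ∀ i, ∑ j, F i j = 0) (hcol : ∀ j, ∑ i, F i j = 0) :
    IsSMR m n n m fun i j => some (F i j) := by
  refine ⟨fun i => by simp, fun j => by simp, fun i j x hx => ?_, fun x hx => ?_,
    by simpa, by simpa⟩
  · exact Option.some_injective _ hx ▸ hmem i j
  · obtain ⟨i, j, rfl⟩ := hsurj x hx
    refine ⟨(i, j), rfl, fun p hp => ?_⟩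
    exact injective_uncurry_of_surjOn_smrEntrySet F hmem hsurj (Option.some_injective _ hp)

end FullArray

def cyclicSucc (n j : ℕ) : ℕ := if j + 1 = n then 0 else j + 1

def cyclicDiff (n : ℕ) (y : ℕ → ℤ) (j : ℕ) : ℤ := y (cyclicSucc n j) - y j

/-- By counting, `y` and its cyclic differences are bijections from `{0, …, 2K-1}` onto
`{K+1, …, 3K}` and `{±1, …, ±K}` respectively. -/
structure IsDiffCycle (K : ℕ) (y : ℕ → ℤ) : Prop where
  mapsTo : Set.MapsTo y (range (2 * K)) (Icc ((K : ℤ) + 1) (3 * K))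
  injOn : Set.InjOn y (range (2 * K))
  diff_mapsTo : Set.MapsTo (cyclicDiff (2 * K) y) (range (2 * K)) ((Icc (-(K : ℤ)) K).erase 0)
  diff_injOn : Set.InjOn (cyclicDiff (2 * K) y) (range (2 * K))

namespace IsDiffCycle

variable {K : ℕ} {y : ℕ → ℤ}

theorem surjOn (hy : IsDiffCycle K y) :
    Set.SurjOn y (range (2 * K)) (Icc ((K : ℤ) + 1) (3 * K)) :=
  surjOn_of_injOn_of_card_le _ hy.mapsTo hy.injOn (by rw [Int.card_Icc, card_range]; omega)

theorem diff_surjOn (hy : IsDiffCycle K y) :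
    Set.SurjOn (cyclicDiff (2 * K) y) (range (2 * K)) ((Icc (-(K : ℤ)) K).erase 0) :=
  surjOn_of_injOn_of_card_le _ hy.diff_mapsTo hy.diff_injOn <| by
    rw [card_erase_of_mem (by simp), Int.card_Icc, card_range]; omega

end IsDiffCycle

def cycleArray (n : ℕ) (y : ℕ → ℤ) (i : Fin 3) (j : ℕ) : ℤ :=
  ![cyclicDiff n y j,
    if j % 2 = 0 then y j else -y (cyclicSucc n j),
    if j % 2 = 0 then -y (cyclicSucc n j) else y j] i

def cycleRow (k : ℕ) : Fin 3 := if k % 2 = 0 then 1 else 2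

section CycleArray

variable {n : ℕ} {y : ℕ → ℤ} {j k : ℕ}

theorem cycleArray_zero : cycleArray n y 0 j = cyclicDiff n y j := rfl

theorem cycleArray_one :
    cycleArray n y 1 j = if j % 2 = 0 then y j else -y (cyclicSucc n j) := rfl

theorem cycleArray_two :
    cycleArray n y 2 j = if j % 2 = 0 then -y (cyclicSucc n j) else y j := rfl

theorem sum_cycleArray_col (j : ℕ) : ∑ i, cycleArray n y i j = 0 := by
  rw [Fin.sum_univ_three, cycleArray_zero, cycleArray_one, cycleArray_two, cyclicDiff]
  split_ifs <;> ring

theorem cycleArray_cycleRow (k : ℕ) : cycleArray n y (cycleRow k) k = y k := by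
  unfold cycleRow
  split_ifs with hk
  · rw [cycleArray_one, if_pos hk]
  · rw [cycleArray_two, if_neg hk]

theorem exists_cycleArray_cycleRow_eq_neg (hn : Even n) (hk : k < n) :
    ∃ j < n, cycleArray n y (cycleRow k) j = -y k := by
  rw [Nat.even_iff] at hn
  unfold cycleRow
  split_ifs with hpar
  · refine ⟨if k = 0 then n - 1 else k - 1, by split_ifs <;> omega, ?_⟩
    rw [cycleArray_one, cyclicSucc]
    split_ifs <;> first | omega | (congr 2; omega)
  · refine ⟨k - 1, by omega, ?_⟩
    rw [cycleArray_two, cyclicSucc]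
    split_ifs <;> first | omega | (congr 2; omega)

theorem exists_cycleArray_eq_pm (hn : Even n) {i : Fin 3} (hi : i ≠ 0) (hj : j < n) :
    ∃ k < n, cycleRow k = i ∧ (cycleArray n y i j = y k ∨ cycleArray n y i j = -y k) := by
  rw [Nat.even_iff] at hn
  have hsucc : cyclicSucc n j < n ∧ cyclicSucc n j % 2 = (j + 1) % 2 := by
    unfold cyclicSucc; split_ifs <;> omega
  obtain rfl | rfl : i = 1 ∨ i = 2 := by omega
  · by_cases hpar : j % 2 = 0
    · exact ⟨j, hj, if_pos hpar, .inl (by rw [cycleArray_one, if_pos hpar])⟩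
    · exact ⟨cyclicSucc n j, hsucc.1, if_pos (by omega), .inr (by rw [cycleArray_one, if_neg hpar])⟩
  · by_cases hpar : j % 2 = 0
    · exact ⟨cyclicSucc n j, hsucc.1, if_neg (by omega), .inr (by rw [cycleArray_two, if_pos hpar])⟩
    · exact ⟨j, hj, if_neg hpar, .inl (by rw [cycleArray_two, if_neg hpar])⟩

end CycleArray

namespace IsDiffCycle

variable {K : ℕ} {y : ℕ → ℤ} {j : ℕ}

theorem cycleArray_mem (hy : IsDiffCycle K y) (i : Fin 3) (hj : j < 2 * K) :
    cycleArray (2 * K) y i j ∈ (Icc (-(3 * K : ℤ)) (3 * K)).erase 0 := by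
  simp only [mem_erase, mem_Icc]
  by_cases hi : i = 0
  · have hd := hy.diff_mapsTo (mem_range.mpr hj)
    simp only [mem_coe, mem_erase, mem_Icc] at hd
    rw [hi, cycleArray_zero]
    omega
  · obtain ⟨k, hk, -, hpm⟩ := exists_cycleArray_eq_pm (even_two_mul K) hi hj
    have hyk := hy.mapsTo (mem_range.mpr hk)
    simp only [mem_coe, mem_Icc] at hyk
    rcases hpm with h | h <;> rw [h] <;> omega

theorem exists_cycleArray_eq (hy : IsDiffCycle K y) {x : ℤ}
    (hx : x ∈ (Icc (-(3 * K : ℤ)) (3 * K)).erase 0) :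
    ∃ i, ∃ j < 2 * K, cycleArray (2 * K) y i j = x := by
  simp only [mem_erase, mem_Icc] at hx
  by_cases hsmall : -(K : ℤ) ≤ x ∧ x ≤ K
  · obtain ⟨j, hj, hdj⟩ := hy.diff_surjOn (show x ∈ ((Icc (-(K : ℤ)) K).erase 0 : Set ℤ) by
      simp only [mem_coe, mem_erase, mem_Icc]; omega)
    exact ⟨0, j, mem_range.mp hj, hdj⟩
  · by_cases hpos : 0 < x
    · obtain ⟨k, hk, hyk⟩ := hy.surjOn (show x ∈ (Icc ((K : ℤ) + 1) (3 * K) : Set ℤ) by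
        simp only [mem_coe, mem_Icc]; omega)
      exact ⟨cycleRow k, k, mem_range.mp hk, (cycleArray_cycleRow k).trans hyk⟩
    · obtain ⟨k, hk, hyk⟩ := hy.surjOn (show -x ∈ (Icc ((K : ℤ) + 1) (3 * K) : Set ℤ) by
        simp only [mem_coe, mem_Icc]; omega)
      obtain ⟨j, hj, h⟩ :=
        exists_cycleArray_cycleRow_eq_neg (y := y) (even_two_mul K) (mem_range.mp hk)
      exact ⟨cycleRow k, j, hj, by rw [h, hyk, neg_neg]⟩

theorem exists_cycleArray_eq_neg (hy : IsDiffCycle K y) (i : Fin 3) (hj : j < 2 * K) :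
    ∃ j' < 2 * K, cycleArray (2 * K) y i j' = -cycleArray (2 * K) y i j := by
  by_cases hi : i = 0
  · subst hi
    have hd := hy.diff_mapsTo (mem_range.mpr hj)
    simp only [mem_coe, mem_erase, mem_Icc] at hd
    obtain ⟨j', hj', h⟩ := hy.diff_surjOn (show -cyclicDiff (2 * K) y j ∈
        ((Icc (-(K : ℤ)) K).erase 0 : Set ℤ) by
      simp only [mem_coe, mem_erase, mem_Icc]; omega)
    exact ⟨j', mem_range.mp hj', h⟩
  · obtain ⟨k, hk, rfl, hpm | hpm⟩ := exists_cycleArray_eq_pm (even_two_mul K) hi hj <;> rw [hpm]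
    · exact exists_cycleArray_cycleRow_eq_neg (even_two_mul K) hk
    · exact ⟨k, hk, by rw [neg_neg, cycleArray_cycleRow]⟩

theorem exists_smr (hy : IsDiffCycle K y) :
    ∃ A : Fin 3 → Fin (2 * K) → Option ℤ, IsSMR 3 (2 * K) (2 * K) 3 A ∧
      (∀ (i : Fin 3) (j : Fin (2 * K)), A i j ≠ none) ∧
      (∀ (i : Fin 3) (x : ℤ), (∃ j : Fin (2 * K), A i j = some x) →
        ∃ j : Fin (2 * K), A i j = some (-x)) := by
  set F : Fin 3 → Fin (2 * K) → ℤ := fun i j => cycleArray (2 * K) y i j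
  have hX : smrEntrySet 3 (2 * K) = (Icc (-(3 * K : ℤ)) (3 * K)).erase 0 := by
    rw [smrEntrySet_of_even (by simp)]
    push_cast
    congr 2 <;> omega
  have hmem : ∀ i j, F i j ∈ smrEntrySet 3 (2 * K) := fun i j => hX ▸ hy.cycleArray_mem i j.isLt
  have hsurj : ∀ x ∈ smrEntrySet 3 (2 * K), ∃ i j, F i j = x := by
    intro x hx
    obtain ⟨i, j, hj, rfl⟩ := hy.exists_cycleArray_eq (hX ▸ hx)
    exact ⟨i, ⟨j, hj⟩, rfl⟩
  have hneg : ∀ i, ∀ x ∈ Set.range (F i), -x ∈ Set.range (F i) := by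
    rintro i _ ⟨j, rfl⟩
    obtain ⟨j', hj', h⟩ := hy.exists_cycleArray_eq_neg i j.isLt
    exact ⟨⟨j', hj'⟩, h⟩
  have hinj := injective_uncurry_of_surjOn_smrEntrySet F hmem hsurj
  have hrow : ∀ i, ∑ j, F i j = 0 := fun i =>
    sum_eq_zero_of_injective_of_neg_mem_range
      (fun j j' h => (Prod.ext_iff.mp (@hinj (i, j) (i, j') h)).2) (hneg i)
  refine ⟨fun i j => some (F i j), isSMR_of_surjOn_smrEntrySet F hmem hsurj hrow
    (fun j => sum_cycleArray_col j), fun i j => Option.some_ne_none _, ?_⟩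
  simpa using hneg

end IsDiffCycle

/-- A difference cycle for `K = 2t`, with differences
`1, -2, 3, …, 2t-1, -2t, 1-2t, 2t-2, 3-2t, …, -1, 2t`. -/
def diffCycleEven (t j : ℕ) : ℤ :=
  if j % 2 = 0 then 5 * t - (j / 2 : ℕ)
  else if j < 2 * t then 5 * t + 1 + (j / 2 : ℕ)
  else t + 1 + (j / 2 : ℕ)

/-- A difference cycle for `K = 2t + 1`, with differences
`1, -2, 3, …, -2t, 2t+1, 2t, 1-2t, 2t-2, 3-2t, …, -1, -(2t+1)`. -/
def diffCycleOdd (t j : ℕ) : ℤ :=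
  if j % 2 = 0 then (if j / 2 ≤ t then 3 * t + 2 - (j / 2 : ℕ) else 7 * t + 4 - (j / 2 : ℕ))
  else 3 * t + 3 + (j / 2 : ℕ)

theorem isDiffCycle_diffCycleEven (t : ℕ) : IsDiffCycle (2 * t) (diffCycleEven t) where
  mapsTo j hj := by
    simp only [mem_coe, mem_range, mem_Icc] at hj ⊢
    unfold diffCycleEven; split_ifs <;> omega
  injOn a ha b hb h := by
    simp only [mem_coe, mem_range] at ha hb
    unfold diffCycleEven at h; split_ifs at h <;> omega
  diff_mapsTo j hj := by
    simp only [mem_coe, mem_range, mem_erase, mem_Icc] at hj ⊢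
    unfold cyclicDiff cyclicSucc diffCycleEven; split_ifs <;> omega
  diff_injOn a ha b hb h := by
    simp only [mem_coe, mem_range] at ha hb
    unfold cyclicDiff cyclicSucc diffCycleEven at h; split_ifs at h <;> omega

theorem isDiffCycle_diffCycleOdd (t : ℕ) : IsDiffCycle (2 * t + 1) (diffCycleOdd t) where
  mapsTo j hj := by
    simp only [mem_coe, mem_range, mem_Icc] at hj ⊢
    unfold diffCycleOdd; split_ifs <;> omega
  injOn a ha b hb h := by
    simp only [mem_coe, mem_range] at ha hb
    unfold diffCycleOdd at h; split_ifs at h <;> omega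
  diff_mapsTo j hj := by
    simp only [mem_coe, mem_range, mem_erase, mem_Icc] at hj ⊢
    unfold cyclicDiff cyclicSucc diffCycleOdd; split_ifs <;> omega
  diff_injOn a ha b hb h := by
    simp only [mem_coe, mem_range] at ha hb
    unfold cyclicDiff cyclicSucc diffCycleOdd at h; split_ifs at h <;> omega

theorem exists_isDiffCycle (K : ℕ) : ∃ y, IsDiffCycle K y := by
  obtain ⟨t, rfl | rfl⟩ := Nat.even_or_odd' K
  · exact ⟨_, isDiffCycle_diffCycleEven t⟩
  · exact ⟨_, isDiffCycle_diffCycleOdd t⟩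

theorem smr_three_by_even_neg_closed_general (n : ℕ) (hneven : Even n) :
    ∃ A : Fin 3 → Fin n → Option ℤ, IsSMR 3 n n 3 A ∧
      (∀ (i : Fin 3) (j : Fin n), A i j ≠ none) ∧
      (∀ (i : Fin 3) (x : ℤ), (∃ j : Fin n, A i j = some x) → ∃ j : Fin n, A i j = some (-x)) := by
  obtain ⟨K, rfl⟩ := hneven.two_dvd
  obtain ⟨y, hy⟩ := exists_isDiffCycle K
  exact hy.exists_smr

/-- For every even positive integer `n` there exists a signed magic rectangle
`SMR(3, n)` (with no empty cells) in which, additionally, each row is closed under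
negation: whenever `x` appears in a row, `-x` appears in the same row. -/
theorem smr_three_by_even_neg_closed (n : ℕ) (hn : 0 < n) (hneven : Even n) :
    ∃ A : Fin 3 → Fin n → Option ℤ, IsSMR 3 n n 3 A ∧
      (∀ (i : Fin 3) (j : Fin n), A i j ≠ none) ∧
      (∀ (i : Fin 3) (x : ℤ), (∃ j : Fin n, A i j = some x) → ∃ j : Fin n, A i j = some (-x)) :=
  smr_three_by_even_neg_closed_general n hneven
end

section
/- Let A be a signed magic rectangle SMR(m,n) with entry set X, and let 𝒫₁ = {C₁, C₂, …, Cₙ} be the partition of X given by the columns of A. Let k be an integer with k ≥ m and k dividing mn, and set ℓ = mn/k. If there exists a partition 𝒫₂ = {D₁, D₂, …, D_ℓ} of X such that each D_i has exactly k elements, the elements of each D_i sum to zero, and 𝒫₁ and 𝒫₂ are near orthogonal, then there exists a signed magic rectangle SMR(mn/k, n; k, m). -/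
/-! Put each `x ∈ X` into the cell `(i, j)` with `x ∈ D i` and `x` in column `j` of `A`. Near
orthogonality says that no two elements land in the same cell, so row `i` of the new array holds
exactly the elements of `D i` and column `j` exactly those of column `j` of `A`; the row and column
counts and zero sums are then inherited from these blocks. -/

open Finset Function

lemma smrEntrySet_congr {m r m' r' : ℕ} (h : m * r = m' * r') :
    smrEntrySet m r = smrEntrySet m' r' := by
  have h' : (m : ℤ) * r = m' * r' := by exact_mod_cast h
  simp only [smrEntrySet, h, h']

structure IsPartitionOf {α ι : Type*} (P : ι → Finset α) (X : Finset α) : Prop where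
  pairwise_disjoint : Pairwise (Disjoint on P)
  mem_iff : ∀ x, x ∈ X ↔ ∃ i, x ∈ P i

structure IsZeroSumPartition {ι : Type*} (P : ι → Finset ℤ) (X : Finset ℤ) (k : ℕ) : Prop
    extends IsPartitionOf P X where
  card_eq : ∀ i, #(P i) = k
  sum_eq_zero : ∀ i, ∑ x ∈ P i, x = 0

namespace IsPartitionOf

variable {α ι : Type*} {P : ι → Finset α} {X : Finset α}

lemma subset (hP : IsPartitionOf P X) (i : ι) : P i ⊆ X :=
  fun x hx => (hP.mem_iff x).2 ⟨i, hx⟩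

lemma eq_of_mem (hP : IsPartitionOf P X) {i i' : ι} {x : α} (hi : x ∈ P i) (hi' : x ∈ P i') :
    i = i' := by
  by_contra hne
  exact disjoint_left.1 (hP.pairwise_disjoint hne) hi hi'

end IsPartitionOf

section LineEntries

variable {ι α : Type*} [Fintype ι] {f : ι → Option α}

def HasDistinctEntries (f : ι → Option α) : Prop :=
  ∀ i i' x, f i = some x → f i' = some x → i = i'

lemma HasDistinctEntries.pairwiseDisjoint_toFinset (hf : HasDistinctEntries f) :
    ((univ : Finset ι) : Set ι).PairwiseDisjoint fun i => (f i).toFinset := by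
  intro i _ i' _ hne
  exact disjoint_left.2 fun x hx hx' =>
    hne (hf i i' x (Option.mem_toFinset.1 hx) (Option.mem_toFinset.1 hx'))

variable [DecidableEq α]

def lineEntries (f : ι → Option α) : Finset α :=
  univ.biUnion fun i => (f i).toFinset

lemma mem_lineEntries {x : α} : x ∈ lineEntries f ↔ ∃ i, f i = some x := by
  simp [lineEntries]

lemma HasDistinctEntries.card_lineEntries (hf : HasDistinctEntries f) :
    #(lineEntries f) = #{i | f i ≠ none} := by
  rw [lineEntries, card_biUnion hf.pairwiseDisjoint_toFinset, card_filter]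
  refine sum_congr rfl fun i _ => ?_
  cases f i <;> rfl

lemma HasDistinctEntries.sum_lineEntries [AddCommMonoid α] (hf : HasDistinctEntries f) :
    ∑ x ∈ lineEntries f, x = ∑ i, (f i).getD 0 := by
  rw [lineEntries, sum_biUnion hf.pairwiseDisjoint_toFinset]
  refine sum_congr rfl fun i _ => ?_
  cases f i <;> simp

end LineEntries

section MeetArray

variable {α : Type*} {ℓ n : ℕ}

lemma toList_head?_eq_some_iff {s : Finset α} (hs : #s ≤ 1) {x : α} :
    s.toList.head? = some x ↔ x ∈ s := by
  rcases s.eq_empty_or_nonempty with rfl | hne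
  · simp
  · obtain ⟨a, rfl⟩ := card_eq_one.1 (le_antisymm hs hne.card_pos)
    simp [eq_comm]

variable [DecidableEq α]

/-- The array whose cell `(i, j)` holds the element of `R i ∩ C j`, if there is one. -/
noncomputable def meetArray (R : Fin ℓ → Finset α) (C : Fin n → Finset α) (i : Fin ℓ) (j : Fin n) :
    Option α :=
  (R i ∩ C j).toList.head?

variable {R : Fin ℓ → Finset α} {C : Fin n → Finset α}

lemma meetArray_comm (j : Fin n) : meetArray C R j = fun i => meetArray R C i j := by
  ext i : 1
  rw [meetArray, meetArray, inter_comm]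

lemma meetArray_eq_some_iff (hRC : ∀ i j, #(R i ∩ C j) ≤ 1) {i : Fin ℓ} {j : Fin n} {x : α} :
    meetArray R C i j = some x ↔ x ∈ R i ∧ x ∈ C j := by
  rw [meetArray, toList_head?_eq_some_iff (hRC i j), mem_inter]

variable {X : Finset α}

lemma hasDistinctEntries_meetArray_row (hC : IsPartitionOf C X)
    (hRC : ∀ i j, #(R i ∩ C j) ≤ 1) (i : Fin ℓ) : HasDistinctEntries (meetArray R C i) := by
  intro j j' x hj hj'
  exact hC.eq_of_mem ((meetArray_eq_some_iff hRC).1 hj).2 ((meetArray_eq_some_iff hRC).1 hj').2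

lemma lineEntries_meetArray_row (hR : IsPartitionOf R X) (hC : IsPartitionOf C X)
    (hRC : ∀ i j, #(R i ∩ C j) ≤ 1) (i : Fin ℓ) : lineEntries (meetArray R C i) = R i := by
  ext x
  simp only [mem_lineEntries, meetArray_eq_some_iff hRC]
  exact ⟨fun ⟨_, hx, _⟩ => hx,
    fun hx => ((hC.mem_iff x).1 (hR.subset i hx)).imp fun _ => And.intro hx⟩

end MeetArray

theorem isSMR_meetArray {ℓ n r s : ℕ} {X : Finset ℤ} {R : Fin ℓ → Finset ℤ} {C : Fin n → Finset ℤ}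
    (hX : smrEntrySet ℓ r = X) (hR : IsZeroSumPartition R X r) (hC : IsZeroSumPartition C X s)
    (hRC : ∀ i j, #(R i ∩ C j) ≤ 1) : IsSMR ℓ n r s (meetArray R C) := by
  have hCR : ∀ j i, #(C j ∩ R i) ≤ 1 := fun j i => inter_comm (R i) (C j) ▸ hRC i j
  have hrow := hasDistinctEntries_meetArray_row hC.toIsPartitionOf hRC
  have hrow_entries := lineEntries_meetArray_row hR.toIsPartitionOf hC.toIsPartitionOf hRC
  have hcol (j) : HasDistinctEntries fun i => meetArray R C i j := by
    rw [← meetArray_comm]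
    exact hasDistinctEntries_meetArray_row hR.toIsPartitionOf hCR j
  have hcol_entries (j) : lineEntries (fun i => meetArray R C i j) = C j := by
    rw [← meetArray_comm]
    exact lineEntries_meetArray_row hC.toIsPartitionOf hR.toIsPartitionOf hCR j
  subst hX
  refine ⟨fun i => ?_, fun j => ?_, fun i j x hx => ?_, fun x hx => ?_, fun i => ?_, fun j => ?_⟩
  · rw [← (hrow i).card_lineEntries, hrow_entries, hR.card_eq]
  · rw [← (hcol j).card_lineEntries, hcol_entries, hC.card_eq]
  · exact hR.subset i ((meetArray_eq_some_iff hRC).1 hx).1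
  · obtain ⟨i, hi⟩ := (hR.mem_iff x).1 hx
    obtain ⟨j, hj⟩ := (hC.mem_iff x).1 hx
    refine ⟨(i, j), (meetArray_eq_some_iff hRC).2 ⟨hi, hj⟩, fun p hp => ?_⟩
    have hp' := (meetArray_eq_some_iff hRC).1 hp
    exact Prod.ext (hR.eq_of_mem hp'.1 hi) (hC.eq_of_mem hp'.2 hj)
  · rw [← (hrow i).sum_lineEntries, hrow_entries, hR.sum_eq_zero]
  · rw [← (hcol j).sum_lineEntries, hcol_entries, hC.sum_eq_zero]

namespace IsSMR

variable {m n r s : ℕ} {A : Fin m → Fin n → Option ℤ}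

lemma eq_of_eq_some (hA : IsSMR m n r s A) {i i' : Fin m} {j j' : Fin n} {x : ℤ}
    (h : A i j = some x) (h' : A i' j' = some x) : (i, j) = (i', j') :=
  (hA.2.2.2.1 x (hA.2.2.1 i j x h)).unique h h'

lemma isZeroSumPartition_columns (hA : IsSMR m n r s A) :
    IsZeroSumPartition (fun j => lineEntries (A · j)) (smrEntrySet m r) s := by
  have hdistinct (j : Fin n) : HasDistinctEntries (A · j) := fun i i' _ h h' =>
    congrArg Prod.fst (hA.eq_of_eq_some h h')
  have hdisjoint : Pairwise (Disjoint on fun j => lineEntries (A · j)) := by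
    refine fun j j' hne => disjoint_left.2 fun x hx hx' => hne ?_
    obtain ⟨i, hi⟩ := mem_lineEntries.1 hx
    obtain ⟨i', hi'⟩ := mem_lineEntries.1 hx'
    exact congrArg Prod.snd (hA.eq_of_eq_some hi hi')
  obtain ⟨-, hcol, hmem, huniq, -, hcsum⟩ := hA
  have hcover (x : ℤ) : x ∈ smrEntrySet m r ↔ ∃ j, x ∈ lineEntries (A · j) := by
    refine ⟨fun hx => ?_, fun ⟨j, hj⟩ => ?_⟩
    · obtain ⟨p, hp, -⟩ := huniq x hx
      exact ⟨p.2, mem_lineEntries.2 ⟨p.1, hp⟩⟩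
    · obtain ⟨i, hi⟩ := mem_lineEntries.1 hj
      exact hmem i j x hi
  refine ⟨⟨hdisjoint, hcover⟩, fun j => ?_, fun j => ?_⟩
  · rw [(hdistinct j).card_lineEntries, hcol j]
  · rw [(hdistinct j).sum_lineEntries, hcsum j]

end IsSMR

theorem smr_main_construction_general (m n k : ℕ) (hdvd : k ∣ m * n)
    (A : Fin m → Fin n → Option ℤ) (hA : IsSMR m n n m A)
    (D : Fin (m * n / k) → Finset ℤ)
    (hcard : ∀ i, (D i).card = k)
    (hsum : ∀ i, ∑ x ∈ D i, x = 0)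
    (hdisj : ∀ i₁ i₂, i₁ ≠ i₂ → Disjoint (D i₁) (D i₂))
    (hcover : ∀ x : ℤ, x ∈ smrEntrySet m n ↔ ∃ i, x ∈ D i)
    (hortho : ∀ (i : Fin (m * n / k)) (j : Fin n),
      ((D i : Set ℤ) ∩ {x : ℤ | ∃ r : Fin m, A r j = some x}).Subsingleton) :
    ∃ B : Fin (m * n / k) → Fin n → Option ℤ, IsSMR (m * n / k) n k m B := by
  have hX : smrEntrySet (m * n / k) k = smrEntrySet m n :=
    smrEntrySet_congr (Nat.div_mul_cancel hdvd)
  have hD : IsZeroSumPartition D (smrEntrySet m n) k :=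
    ⟨⟨fun i₁ i₂ => hdisj i₁ i₂, hcover⟩, hcard, hsum⟩
  have hnear (i : Fin (m * n / k)) (j : Fin n) : #(D i ∩ lineEntries (A · j)) ≤ 1 :=
    card_le_one.2 fun x hx y hy => by
      simp only [mem_inter, mem_lineEntries] at hx hy
      exact hortho i j ⟨hx.1, hx.2⟩ ⟨hy.1, hy.2⟩
  exact ⟨_, isSMR_meetArray hX hD hA.isZeroSumPartition_columns hnear⟩

/-- Main construction: let `A` be an `SMR(m, n)` (i.e. `SMR(m, n; n, m)`, no empty
cells) with entry set `X = smrEntrySet m n`, and let `𝒫₁` be the partition of `X`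
given by the columns of `A`.  Let `k ≥ m` with `k ∣ mn` and `ℓ = mn/k`.  If
`D : Fin ℓ → Finset ℤ` is a partition of `X` into `k`-element sets each summing to
zero which is near orthogonal to `𝒫₁` (each `D i` meets each column of `A` in at
most one element), then there exists an `SMR(mn/k, n; k, m)`. -/
theorem smr_main_construction (m n k : ℕ) (hm : 0 < m) (hn : 0 < n)
    (hkm : m ≤ k) (hdvd : k ∣ m * n)
    (A : Fin m → Fin n → Option ℤ) (hA : IsSMR m n n m A)
    (D : Fin (m * n / k) → Finset ℤ)
    (hcard : ∀ i, (D i).card = k)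
    (hsum : ∀ i, ∑ x ∈ D i, x = 0)
    (hdisj : ∀ i₁ i₂, i₁ ≠ i₂ → Disjoint (D i₁) (D i₂))
    (hcover : ∀ x : ℤ, x ∈ smrEntrySet m n ↔ ∃ i, x ∈ D i)
    (hortho : ∀ (i : Fin (m * n / k)) (j : Fin n),
      ((D i : Set ℤ) ∩ {x : ℤ | ∃ r : Fin m, A r j = some x}).Subsingleton) :
    ∃ B : Fin (m * n / k) → Fin n → Option ℤ, IsSMR (m * n / k) n k m B :=
  smr_main_construction_general m n k hdvd A hA D hcard hsum hdisj hcover hortho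
end

section
/- Let n and k be integers with n > k ≥ 5, k odd, n even, and k dividing 3n, and write n = kq + r with 0 ≤ r < k. Let R₃ = {±3i : 1 ≤ i ≤ n/2}. Then there exists a collection S₃ of pairwise disjoint 3-element subsets of R₃ such that: (1) the elements of each 3-subset sum to zero; (2) if {a,b,c} ∈ S₃ then {−a,−b,−c} ∈ S₃; (3) |S₃| ≥ q if r = 0, |S₃| ≥ q+1 if r = k/3, and |S₃| ≥ q+2 if r = 2k/3. -/
/-- The set `R₃ = {±3i : 1 ≤ i ≤ n/2}`, the entry set of the third row of the
standard `SMR(3, n)` for `n` even. -/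
def smrR3 (n : ℕ) : Finset ℤ :=
  (Finset.Icc 1 (n / 2)).biUnion fun i => {3 * (i : ℤ), -(3 * (i : ℤ))}

/-!
For `4t ≤ n/2` the triples `{3(2j-1), 3(3t-j+1), -3(3t+j)}`, `1 ≤ j ≤ t`, sum to zero, and up to
sign their entries divided by 3 are the odd numbers below `2t`, the numbers in `(2t, 3t]` and those
in `(3t, 4t]`, each used once; so together with their negatives they form `2t` disjoint triples
in `R₃`. Since `n = kq + r` is even and `k` is odd, `q ≡ r (mod 2)`, so `2t = q`, `q + 1`, `q + 2`
can be chosen in the three cases, and `8t ≤ n` holds because `k ≥ 5`, and `k ≥ 9` when `3 ∣ k`.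
-/

open Finset
open scoped Pointwise

section UnionNeg

variable {α : Type*} [AddCommGroup α] [DecidableEq α] {F : Finset (Finset α)}

lemma neg_mem_union_neg {T : Finset α} (hT : T ∈ F ∪ -F) : -T ∈ F ∪ -F := by
  simpa [or_comm] using hT

lemma forall_mem_union_neg {p : Finset α → Prop} (hp : ∀ T, p T → p (-T))
    (hF : ∀ T ∈ F, p T) : ∀ T ∈ F ∪ -F, p T := by
  intro T hT
  rcases mem_union.1 hT with hT | hT
  · exact hF T hT
  · simpa using hp _ (hF _ (mem_neg'.1 hT))

lemma pairwiseDisjoint_union_neg (hF : (F : Set (Finset α)).PairwiseDisjoint id)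
    (hFneg : ∀ T₁ ∈ F, ∀ T₂ ∈ F, Disjoint T₁ (-T₂)) :
    (↑(F ∪ -F) : Set (Finset α)).PairwiseDisjoint id := by
  intro T₁ h₁ T₂ h₂ hne
  change Disjoint T₁ T₂
  simp only [coe_union, Set.mem_union, mem_coe, mem_neg'] at h₁ h₂
  rcases h₁ with h₁ | h₁ <;> rcases h₂ with h₂ | h₂
  · exact hF h₁ h₂ hne
  · simpa using hFneg _ h₁ _ h₂
  · simpa using (hFneg _ h₂ _ h₁).symm
  · have := hF h₁ h₂ (by simpa using hne)
    simpa [neg_def, image_image, Function.comp_def] using (disjoint_image neg_injective).2 this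

lemma card_union_neg (hFneg : ∀ T₁ ∈ F, ∀ T₂ ∈ F, Disjoint T₁ (-T₂))
    (hne : ∀ T ∈ F, T.Nonempty) : #(F ∪ -F) = 2 * #F := by
  have hdisj : Disjoint F (-F) := by
    refine disjoint_left.2 fun T hT hT' => ?_
    have := hFneg _ hT _ (mem_neg'.1 hT')
    rw [neg_neg, disjoint_self, bot_eq_empty] at this
    exact (hne T hT).ne_empty this
  rw [card_union_of_disjoint hdisj, card_neg, two_mul]

end UnionNeg

lemma mem_smrR3 {n : ℕ} {x : ℤ} :
    x ∈ smrR3 n ↔ x % 3 = 0 ∧ x ≠ 0 ∧ -(3 * (n / 2 : ℕ)) ≤ x ∧ x ≤ 3 * (n / 2 : ℕ) := by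
  simp only [smrR3, mem_biUnion, mem_Icc, mem_insert, mem_singleton]
  constructor
  · rintro ⟨i, hi, rfl | rfl⟩ <;> omega
  · exact fun hx => ⟨(x / 3).natAbs, by omega, by omega⟩

lemma neg_smrR3 (n : ℕ) : -smrR3 n = smrR3 n := by
  ext x
  simp only [mem_neg', mem_smrR3]
  omega

def zeroSumTriple (t j : ℕ) : Finset ℤ :=
  {3 * (2 * (j : ℤ) - 1), 3 * (3 * (t : ℤ) - j + 1), -(3 * (3 * (t : ℤ) + j))}

section ZeroSumTriple

variable {t j j' : ℕ}

lemma zeroSumTriple_subset_smrR3 {n : ℕ} (hj : j ∈ Icc 1 t) (ht : 4 * t ≤ n / 2) :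
    zeroSumTriple t j ⊆ smrR3 n := by
  rw [mem_Icc] at hj
  intro x hx
  simp only [zeroSumTriple, mem_insert, mem_singleton] at hx
  rw [mem_smrR3]
  rcases hx with rfl | rfl | rfl <;> omega

lemma card_zeroSumTriple (t j : ℕ) : #(zeroSumTriple t j) = 3 :=
  card_eq_three.2 ⟨_, _, _, by omega, by omega, by omega, rfl⟩

lemma sum_zeroSumTriple (t j : ℕ) : ∑ x ∈ zeroSumTriple t j, x = 0 := by
  rw [zeroSumTriple, sum_insert (by simp; omega), sum_insert (by simp; omega), sum_singleton]
  ring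

lemma disjoint_zeroSumTriple (hj : j ∈ Icc 1 t) (hj' : j' ∈ Icc 1 t) (hne : j ≠ j') :
    Disjoint (zeroSumTriple t j) (zeroSumTriple t j') := by
  rw [mem_Icc] at hj hj'
  simp only [zeroSumTriple, disjoint_left, mem_insert, mem_singleton]
  rintro x (rfl | rfl | rfl) h <;> rcases h with h | h | h <;> omega

lemma disjoint_zeroSumTriple_neg (hj : j ∈ Icc 1 t) (hj' : j' ∈ Icc 1 t) :
    Disjoint (zeroSumTriple t j) (-zeroSumTriple t j') := by
  rw [mem_Icc] at hj hj'
  simp only [zeroSumTriple, disjoint_left, mem_neg', mem_insert, mem_singleton]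
  rintro x (rfl | rfl | rfl) h <;> rcases h with h | h | h <;> omega

end ZeroSumTriple

def zeroSumTripleFamily (t : ℕ) : Finset (Finset ℤ) :=
  (Icc 1 t).image (zeroSumTriple t)

lemma pairwiseDisjoint_zeroSumTripleFamily (t : ℕ) :
    (zeroSumTripleFamily t : Set (Finset ℤ)).PairwiseDisjoint id := by
  rw [zeroSumTripleFamily, coe_image]
  rintro _ ⟨j, hj, rfl⟩ _ ⟨j', hj', rfl⟩ hne
  exact disjoint_zeroSumTriple hj hj' fun h => hne (h ▸ rfl)

lemma card_zeroSumTripleFamily (t : ℕ) : #(zeroSumTripleFamily t) = t := by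
  rw [zeroSumTripleFamily, card_image_of_injOn, Nat.card_Icc, Nat.add_sub_cancel]
  intro j hj j' hj' h
  by_contra hne
  have := disjoint_zeroSumTriple hj hj' hne
  rw [h, disjoint_self, bot_eq_empty, ← card_eq_zero, card_zeroSumTriple] at this
  exact three_ne_zero this

theorem exists_symmetric_zeroSum_triples (n t : ℕ) (ht : 4 * t ≤ n / 2) :
    ∃ S : Finset (Finset ℤ),
      (∀ T ∈ S, T ⊆ smrR3 n ∧ #T = 3 ∧ ∑ x ∈ T, x = 0) ∧ (∀ T ∈ S, -T ∈ S) ∧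
      (S : Set (Finset ℤ)).PairwiseDisjoint id ∧ #S = 2 * t := by
  set F := zeroSumTripleFamily t
  have hF : ∀ T ∈ F, T ⊆ smrR3 n ∧ #T = 3 ∧ ∑ x ∈ T, x = 0 := by
    simp only [F, zeroSumTripleFamily, forall_mem_image]
    exact fun j hj => ⟨zeroSumTriple_subset_smrR3 hj ht, card_zeroSumTriple t j,
      sum_zeroSumTriple t j⟩
  have hFneg : ∀ T₁ ∈ F, ∀ T₂ ∈ F, Disjoint T₁ (-T₂) := by
    simp only [F, zeroSumTripleFamily, forall_mem_image]
    exact fun j hj j' hj' => disjoint_zeroSumTriple_neg hj hj'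
  refine ⟨F ∪ -F, forall_mem_union_neg ?_ hF, fun _ => neg_mem_union_neg,
    pairwiseDisjoint_union_neg (pairwiseDisjoint_zeroSumTripleFamily t) hFneg, ?_⟩
  · rintro T ⟨hsub, hcard, hsum⟩
    refine ⟨neg_smrR3 n ▸ neg_subset_neg hsub, (card_neg T).trans hcard, ?_⟩
    rw [sum_neg_index, sum_neg_distrib, hsum, neg_zero]
  · rw [card_union_neg hFneg fun T hT => card_pos.1 ((hF T hT).2.1 ▸ three_pos),
      card_zeroSumTripleFamily]

lemma exists_family_size (n k : ℕ) (hk5 : 5 ≤ k) (hkn : k < n) (hkodd : Odd k)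
    (hneven : Even n) :
    ∃ t, 4 * t ≤ n / 2 ∧ (n % k = 0 → n / k ≤ 2 * t) ∧
      (3 * (n % k) = k → n / k + 1 ≤ 2 * t) ∧ (3 * (n % k) = 2 * k → n / k + 2 ≤ 2 * t) := by
  have hdm := Nat.div_add_mod n k
  have hq : 1 ≤ n / k := Nat.div_pos hkn.le (by omega)
  have hpar : Even (n / k) ↔ Even (n % k) := by
    rw [← hdm, Nat.even_add, Nat.even_mul] at hneven
    simpa [Nat.not_even_iff_odd.2 hkodd] using hneven
  rw [Nat.even_iff, Nat.even_iff] at hpar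
  have hk := Nat.odd_iff.1 hkodd
  have h5 : 5 * (n / k) ≤ k * (n / k) := Nat.mul_le_mul_right _ hk5
  by_cases h0 : n % k = 0
  · exact ⟨n / k / 2, by omega, by omega, by omega, by omega⟩
  by_cases h1 : 3 * (n % k) = k
  · have h9 : 9 * (n / k) ≤ k * (n / k) := Nat.mul_le_mul_right _ (by omega)
    exact ⟨(n / k + 1) / 2, by omega, by omega, by omega, by omega⟩
  by_cases h2 : 3 * (n % k) = 2 * k
  · have h9 : 9 * (n / k) ≤ k * (n / k) := Nat.mul_le_mul_right _ (by omega)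
    exact ⟨n / k / 2 + 1, by omega, by omega, by omega, by omega⟩
  exact ⟨0, by omega, by omega, by omega, by omega⟩

theorem exists_S3_general (n k : ℕ) (hk5 : 5 ≤ k) (hkn : k < n) (hkodd : Odd k)
    (hneven : Even n) :
    ∃ S₃ : Finset (Finset ℤ),
      (∀ T ∈ S₃, T ⊆ smrR3 n ∧ T.card = 3 ∧ ∑ x ∈ T, x = 0) ∧
      (∀ T ∈ S₃, T.image (fun x => -x) ∈ S₃) ∧
      (∀ T₁ ∈ S₃, ∀ T₂ ∈ S₃, T₁ ≠ T₂ → Disjoint T₁ T₂) ∧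
      (n % k = 0 → n / k ≤ S₃.card) ∧
      (3 * (n % k) = k → n / k + 1 ≤ S₃.card) ∧
      (3 * (n % k) = 2 * k → n / k + 2 ≤ S₃.card) := by
  obtain ⟨t, ht, h0, h1, h2⟩ := exists_family_size n k hk5 hkn hkodd hneven
  obtain ⟨S₃, hT, hneg, hdisj, hcard⟩ := exists_symmetric_zeroSum_triples n t ht
  exact ⟨S₃, hT, hneg, fun _ h₁ _ h₂ hne => hdisj h₁ h₂ hne,
    by omega, by omega, by omega⟩

/-- For `n > k ≥ 5` with `k` odd, `n` even and `k ∣ 3n` (writing `q = n / k` and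
`r = n % k`), there exists a collection `S₃` of pairwise disjoint 3-element subsets
of `R₃ = {±3i : 1 ≤ i ≤ n/2}` such that each 3-subset sums to zero, `S₃` is closed
under negation, and `|S₃|` is at least `q`, `q + 1`, `q + 2` according as `r = 0`,
`3r = k`, `3r = 2k`. -/
theorem exists_S3 (n k : ℕ) (hk5 : 5 ≤ k) (hkn : k < n) (hkodd : Odd k)
    (hneven : Even n) (hdvd : k ∣ 3 * n) :
    ∃ S₃ : Finset (Finset ℤ),
      (∀ T ∈ S₃, T ⊆ smrR3 n ∧ T.card = 3 ∧ ∑ x ∈ T, x = 0) ∧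
      (∀ T ∈ S₃, T.image (fun x => -x) ∈ S₃) ∧
      (∀ T₁ ∈ S₃, ∀ T₂ ∈ S₃, T₁ ≠ T₂ → Disjoint T₁ T₂) ∧
      (n % k = 0 → n / k ≤ S₃.card) ∧
      (3 * (n % k) = k → n / k + 1 ≤ S₃.card) ∧
      (3 * (n % k) = 2 * k → n / k + 2 ≤ S₃.card) :=
  exists_S3_general n k hk5 hkn hkodd hneven
end

section
/- If there exists an integer Heffter array H(m,n;s,t), then there exists a signed magic rectangle SMR(m, 2n; 2s, t) (obtained by placing A and −A side by side as [A −A]). -/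
/-- `A` is an integer Heffter array `H(m, n; s, t)`: an `m × n` array with cells
either empty (`none`) or filled with an integer from `{±1, …, ±ms}`, having exactly
`s` filled cells in each row and `t` in each column, all of whose row sums and
column sums are zero, and such that for every `x ∈ {1, …, ms}` exactly one of `x`
and `-x` appears in the array, in exactly one cell. -/
def IsHeffter (m n s t : ℕ) (A : Fin m → Fin n → Option ℤ) : Prop :=
  (∀ i : Fin m, (Finset.univ.filter fun j : Fin n => A i j ≠ none).card = s) ∧
  (∀ j : Fin n, (Finset.univ.filter fun i : Fin m => A i j ≠ none).card = t) ∧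
  (∀ (i : Fin m) (j : Fin n) (x : ℤ), A i j = some x → 1 ≤ |x| ∧ |x| ≤ (m : ℤ) * s) ∧
  (∀ x : ℤ, 1 ≤ x → x ≤ (m : ℤ) * s →
    ∃! p : Fin m × Fin n, A p.1 p.2 = some x ∨ A p.1 p.2 = some (-x)) ∧
  (∀ i : Fin m, ∑ j : Fin n, (A i j).getD 0 = 0) ∧
  (∀ j : Fin n, ∑ i : Fin m, (A i j).getD 0 = 0)

open Finset

section hcat

variable {α : Type*} {m n₁ n₂ : ℕ}

def hcat (A : Fin m → Fin n₁ → α) (B : Fin m → Fin n₂ → α) : Fin m → Fin (n₁ + n₂) → α :=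
  fun i => Fin.append (A i) (B i)

variable (A : Fin m → Fin n₁ → α) (B : Fin m → Fin n₂ → α)

@[simp]
lemma hcat_castAdd (i : Fin m) (k : Fin n₁) : hcat A B i (Fin.castAdd n₂ k) = A i k :=
  Fin.append_left _ _ _

@[simp]
lemma hcat_natAdd (i : Fin m) (k : Fin n₂) : hcat A B i (Fin.natAdd n₁ k) = B i k :=
  Fin.append_right _ _ _

lemma sum_hcat_row {M : Type*} [AddCommMonoid M] (f : α → M) (i : Fin m) :
    ∑ j, f (hcat A B i j) = ∑ k, f (A i k) + ∑ k, f (B i k) := by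
  simp [Fin.sum_univ_add]

lemma card_filter_hcat_row (p : α → Prop) [DecidablePred p] (i : Fin m) :
    #{j | p (hcat A B i j)} = #{k | p (A i k)} + #{k | p (B i k)} := by
  simp only [card_filter]
  exact sum_hcat_row A B (fun a => if p a then 1 else 0) i

lemma card_filter_hcat (p : α → Prop) [DecidablePred p] :
    #{q : Fin m × Fin (n₁ + n₂) | p (hcat A B q.1 q.2)} =
      #{q : Fin m × Fin n₁ | p (A q.1 q.2)} + #{q : Fin m × Fin n₂ | p (B q.1 q.2)} := by
  simp only [card_filter, Fintype.sum_prod_type, ← sum_add_distrib]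
  exact sum_congr rfl fun i _ => sum_hcat_row A B (fun a => if p a then 1 else 0) i

end hcat

lemma Option.getD_map_neg {α : Type*} [NegZeroClass α] (o : Option α) :
    (o.map Neg.neg).getD 0 = -o.getD 0 := by
  cases o <;> simp

lemma Option.map_neg_eq_some_iff {α : Type*} [InvolutiveNeg α] (o : Option α) (x : α) :
    o.map Neg.neg = some x ↔ o = some (-x) := by
  cases o <;> simp [neg_eq_iff_eq_neg]

lemma mem_smrEntrySet_two_mul {m s : ℕ} {x : ℤ} :
    x ∈ smrEntrySet m (2 * s) ↔ x ≠ 0 ∧ |x| ≤ (m : ℤ) * s := by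
  have hodd : (m * (2 * s)) % 2 ≠ 1 := by
    rw [Nat.mul_left_comm]; omega
  have hhalf : (m : ℤ) * ((2 * s : ℕ) : ℤ) / 2 = m * s := by
    push_cast
    rw [mul_left_comm, Int.mul_ediv_cancel_left _ two_ne_zero]
  rw [smrEntrySet, if_neg hodd, hhalf, mem_erase, mem_Icc, abs_le]

section heffter

variable {m n s t : ℕ} {A : Fin m → Fin n → Option ℤ}

/-- The array `[A  -A]`. -/
def hcatNeg (A : Fin m → Fin n → Option ℤ) : Fin m → Fin (n + n) → Option ℤ :=
  hcat A fun i k => (A i k).map Neg.neg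

lemma existsUnique_hcatNeg_eq_some {x : ℤ} (hx : x ≠ 0)
    (h : ∃! p : Fin m × Fin n, A p.1 p.2 = some x ∨ A p.1 p.2 = some (-x)) :
    ∃! q : Fin m × Fin (n + n), hcatNeg A q.1 q.2 = some x := by
  rw [Fintype.existsUnique_iff_card_one] at h ⊢
  rw [hcatNeg, card_filter_hcat _ _ (· = some x)]
  simp only [Option.map_neg_eq_some_iff]
  rw [← h, filter_or, card_union_of_disjoint]
  refine disjoint_filter.2 fun p _ hpos hneg => hx ?_
  rw [hpos, Option.some_inj] at hneg
  exact self_eq_neg.mp hneg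

lemma IsHeffter.existsUnique_eq_some_or_eq_some_neg (hA : IsHeffter m n s t A) {x : ℤ}
    (hx : x ≠ 0) (hxs : |x| ≤ m * s) :
    ∃! p : Fin m × Fin n, A p.1 p.2 = some x ∨ A p.1 p.2 = some (-x) := by
  have h := hA.2.2.2.1 |x| (Int.one_le_abs hx) hxs
  rcases abs_choice x with hax | hax <;> rw [hax] at h
  · exact h
  · simpa only [neg_neg, or_comm] using h

lemma IsHeffter.ne_zero_and_abs_le (hA : IsHeffter m n s t A) {i : Fin m} {k : Fin n} {x : ℤ}
    (hx : A i k = some x) : x ≠ 0 ∧ |x| ≤ m * s := by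
  obtain ⟨hpos, hle⟩ := hA.2.2.1 i k x hx
  exact ⟨abs_pos.mp hpos, hle⟩

theorem IsHeffter.isSMR_hcatNeg (hA : IsHeffter m n s t A) :
    IsSMR m (n + n) (2 * s) t (hcatNeg A) := by
  obtain ⟨hrowCard, hcolCard, -, -, hrowSum, hcolSum⟩ := id hA
  refine ⟨fun i => ?_, fun j => ?_, fun i j x hx => ?_, fun x hx => ?_, fun i => ?_, fun j => ?_⟩
  · rw [hcatNeg, card_filter_hcat_row _ _ (· ≠ none)]
    simp only [ne_eq, Option.map_eq_none_iff, hrowCard]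
    omega
  · induction j using Fin.addCases with
    | left k => simpa only [hcatNeg, hcat_castAdd] using hcolCard k
    | right k =>
      simpa only [hcatNeg, hcat_natAdd, ne_eq, Option.map_eq_none_iff] using hcolCard k
  · rw [mem_smrEntrySet_two_mul]
    induction j using Fin.addCases with
    | left k => exact hA.ne_zero_and_abs_le (by rwa [hcatNeg, hcat_castAdd] at hx)
    | right k =>
      rw [hcatNeg, hcat_natAdd, Option.map_neg_eq_some_iff] at hx
      simpa using hA.ne_zero_and_abs_le hx
  · obtain ⟨hx0, hxs⟩ := mem_smrEntrySet_two_mul.mp hx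
    exact existsUnique_hcatNeg_eq_some hx0 (hA.existsUnique_eq_some_or_eq_some_neg hx0 hxs)
  · rw [hcatNeg, sum_hcat_row _ _ (Option.getD · 0)]
    simp only [Option.getD_map_neg, sum_neg_distrib, hrowSum, neg_zero, add_zero]
  · induction j using Fin.addCases with
    | left k => simpa only [hcatNeg, hcat_castAdd] using hcolSum k
    | right k =>
      simp only [hcatNeg, hcat_natAdd, Option.getD_map_neg, sum_neg_distrib, hcolSum k, neg_zero]

end heffter

/-- If there exists an integer Heffter array `H(m, n; s, t)`, then there exists a
signed magic rectangle `SMR(m, 2n; 2s, t)` (obtained as `[A  -A]`). -/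
theorem smr_of_heffter_side_by_side (m n s t : ℕ)
    (h : ∃ A : Fin m → Fin n → Option ℤ, IsHeffter m n s t A) :
    ∃ B : Fin m → Fin (2 * n) → Option ℤ, IsSMR m (2 * n) (2 * s) t B := by
  obtain ⟨A, hA⟩ := h
  rw [two_mul n]
  exact ⟨hcatNeg A, hA.isSMR_hcatNeg⟩
end
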